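/- Let H ∈ (3/4, 1). Then ∫_{ℝ²} ( ∫_0^1 (u-x)₊^{H-3/2} · (u-y)₊^{H-3/2} du )² dx dy = B(H-1/2, 2-2H)² / ((4H-3)(2H-1)). -/

import Mathlib

/-
Write `α = H - 3/2`. Expanding the square and using Tonelli to integrate over `(x, y)` first,
the integral becomes `∫∫_{[0,1]²} (∫_ℝ (u-x)₊^α (v-x)₊^α dx)² du dv`. The substitution
`x = u - (u - v)/(1 - r)` turns the inner integral into a Beta integral, equal to
`B(H-1/2, 2-2H) |u-v|^(2H-2)`, and `∫∫_{[0,1]²} |u-v|^(4H-4) = 2/((4H-3)(4H-2))`.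
The Bochner integral of the statement agrees with this Lebesgue integral because the finiteness
of the latter makes `u ↦ (u-x)₊^α (u-y)₊^α` integrable for almost every `(x, y)`.
-/

open MeasureTheory Set

/-- The Euler Beta function `B(a,b) = Γ(a)Γ(b)/Γ(a+b)`. -/
noncomputable def eulerBeta (a b : ℝ) : ℝ := Real.Gamma a * Real.Gamma b / Real.Gamma (a + b)

/-- `(a)₊^p`: `a ^ p` (real power) when `a > 0`, and `0` when `a ≤ 0`. -/
noncomputable def posPow (a p : ℝ) : ℝ := if 0 < a then a ^ p else 0

open scoped ENNReal

theorem posPow_nonneg (a p : ℝ) : 0 ≤ posPow a p := by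
  unfold posPow
  split_ifs <;> positivity

theorem posPow_of_pos {a : ℝ} (h : 0 < a) (p : ℝ) : posPow a p = a ^ p := if_pos h

theorem posPow_of_nonpos {a : ℝ} (h : a ≤ 0) (p : ℝ) : posPow a p = 0 := if_neg h.not_gt

@[fun_prop]
theorem measurable_posPow (p : ℝ) : Measurable fun a => posPow a p :=
  Measurable.ite measurableSet_Ioi (by fun_prop) measurable_const

theorem eulerBeta_pos {a b : ℝ} (ha : 0 < a) (hb : 0 < b) : 0 < eulerBeta a b :=
  ProbabilityTheory.beta_pos ha hb

theorem lintegral_Ioo_rpow_mul_one_sub_rpow {a b : ℝ} (ha : 0 < a) (hb : 0 < b) :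
    ∫⁻ x in Ioo 0 1, ENNReal.ofReal (x ^ (a - 1) * (1 - x) ^ (b - 1))
      = ENNReal.ofReal (eulerBeta a b) := by
  have hB : 0 < ProbabilityTheory.beta a b := ProbabilityTheory.beta_pos ha hb
  have h := ProbabilityTheory.lintegral_betaPDF_eq_one ha hb
  simp_rw [ProbabilityTheory.lintegral_betaPDF, mul_assoc,
    ENNReal.ofReal_mul (one_div_pos.2 hB).le] at h
  rw [lintegral_const_mul' _ _ ENNReal.ofReal_ne_top, ENNReal.ofReal_div_of_pos hB,
    ENNReal.ofReal_one, one_div, mul_comm] at h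
  rw [ENNReal.eq_inv_of_mul_eq_one_left h, inv_inv]
  rfl

theorem setLIntegral_Iio_eq_setLIntegral_Ioo {d : ℝ} (hd : 0 < d) (u : ℝ) (F : ℝ → ℝ≥0∞) :
    ∫⁻ x in Iio (u - d), F x
      = ∫⁻ r in Ioo 0 1, ENNReal.ofReal (d / (1 - r) ^ 2) * F (u - d / (1 - r)) := by
  set φ : ℝ → ℝ := fun r => u - d / (1 - r)
  have himage : φ '' Ioo 0 1 = Iio (u - d) := by
    ext x
    constructor
    · rintro ⟨r, ⟨hr0, hr1⟩, rfl⟩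
      have : d < d / (1 - r) := by
        rw [lt_div_iff₀ (by linarith)]; nlinarith
      simp only [φ, mem_Iio]; linarith
    · intro hx
      have hux : d < u - x := by simp only [mem_Iio] at hx; linarith
      refine ⟨1 - d / (u - x), ⟨?_, ?_⟩, ?_⟩
      · rw [sub_pos, div_lt_one (by linarith)]; exact hux
      · have : 0 < d / (u - x) := div_pos hd (by linarith)
        linarith
      · simp only [φ, sub_sub_cancel]
        field_simp
        ring
  have hderiv : ∀ r ∈ Ioo (0 : ℝ) 1, HasDerivWithinAt φ (-(d / (1 - r) ^ 2)) (Ioo 0 1) r := by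
    rintro r ⟨-, hr1⟩
    have h1r : 1 - r ≠ 0 := by linarith
    refine HasDerivAt.hasDerivWithinAt ?_
    convert (((hasDerivAt_id r).const_sub 1).inv h1r).const_mul d |>.const_sub u using 1
    · ext x; simp [φ, div_eq_mul_inv]
    · simp only [id]
      field_simp
  have hinj : InjOn φ (Ioo 0 1) := by
    rintro r₁ ⟨-, h₁⟩ r₂ ⟨-, h₂⟩ h
    simp only [φ] at h
    field_simp at h
    exact mul_left_cancel₀ hd.ne' (by linear_combination -h)
  simp_rw [← himage, lintegral_image_eq_lintegral_abs_deriv_mul measurableSet_Ioo hderiv hinj,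
    abs_neg, abs_of_nonneg (div_nonneg hd.le (sq_nonneg _))]
  rfl

theorem lintegral_posPow_mul_posPow {α β u v : ℝ} (hβ : -1 < β) (hαβ : α + β < -1)
    (hvu : v < u) :
    ∫⁻ x, ENNReal.ofReal (posPow (u - x) α) * ENNReal.ofReal (posPow (v - x) β)
      = ENNReal.ofReal (eulerBeta (β + 1) (-α - β - 1) * (u - v) ^ (α + β + 1)) := by
  set d := u - v
  have hd : 0 < d := sub_pos.2 hvu
  have hzero : ∀ x ∈ Ici v,
      ENNReal.ofReal (posPow (u - x) α) * ENNReal.ofReal (posPow (v - x) β) = 0 := by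
    intro x hx
    rw [posPow_of_nonpos (sub_nonpos.2 hx), ENNReal.ofReal_zero, mul_zero]
  rw [← lintegral_add_compl _ measurableSet_Iio, compl_Iio,
    setLIntegral_eq_zero measurableSet_Ici hzero, add_zero,
    show v = u - d by simp [d], setLIntegral_Iio_eq_setLIntegral_Ioo hd,
    mul_comm (eulerBeta _ _), ENNReal.ofReal_mul (by positivity),
    ← lintegral_Ioo_rpow_mul_one_sub_rpow (by linarith) (by linarith : 0 < -α - β - 1),
    ← lintegral_const_mul' _ _ ENNReal.ofReal_ne_top]
  refine setLIntegral_congr_fun measurableSet_Ioo fun r ⟨hr, hr'⟩ => ?_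
  have hw : 0 < 1 - r := by linarith
  have hjac : d / (1 - r) ^ 2 * ((d / (1 - r)) ^ α * (d * r / (1 - r)) ^ β)
      = d ^ (α + β + 1) * (r ^ (β + 1 - 1) * (1 - r) ^ (-α - β - 1 - 1)) := by
    rw [Real.div_rpow hd.le hw.le, Real.div_rpow (by positivity) hw.le, Real.mul_rpow hd.le hr.le,
      Real.rpow_add hd, Real.rpow_add hd, Real.rpow_one, add_sub_cancel_right,
      show -α - β - 1 - 1 = -(α + β + 2) by ring, Real.rpow_neg hw.le, Real.rpow_add hw,
      Real.rpow_add hw, Real.rpow_two]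
    field_simp
  rw [show u - (u - d / (1 - r)) = d / (1 - r) by ring,
    show u - d - (u - d / (1 - r)) = d * r / (1 - r) by field_simp; ring,
    posPow_of_pos (by positivity), posPow_of_pos (by positivity),
    ← ENNReal.ofReal_mul (by positivity), ← ENNReal.ofReal_mul (by positivity),
    ← ENNReal.ofReal_mul (by positivity), hjac]

theorem lintegral_posPow_mul_posPow_of_ne {α u v : ℝ} (hα : -1 < α) (hα' : α < -1 / 2)
    (huv : u ≠ v) :
    ∫⁻ x, ENNReal.ofReal (posPow (u - x) α) * ENNReal.ofReal (posPow (v - x) α)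
      = ENNReal.ofReal (eulerBeta (α + 1) (-2 * α - 1) * |u - v| ^ (2 * α + 1)) := by
  have hexp : -α - α - 1 = -2 * α - 1 ∧ α + α + 1 = 2 * α + 1 := ⟨by ring, by ring⟩
  rcases huv.lt_or_gt with h | h
  · rw [abs_sub_comm, abs_of_pos (sub_pos.2 h), ← hexp.1, ← hexp.2,
      ← lintegral_posPow_mul_posPow hα (by linarith) h]
    exact lintegral_congr fun x => mul_comm _ _
  · rw [abs_of_pos (sub_pos.2 h), ← hexp.1, ← hexp.2]
    exact lintegral_posPow_mul_posPow hα (by linarith) h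

theorem lintegral_Ioc_eq_ofReal_intervalIntegral {f : ℝ → ℝ} {a b : ℝ} (hab : a ≤ b)
    (hf : IntervalIntegrable f volume a b) (hf₀ : ∀ x ∈ Ioc a b, 0 ≤ f x) :
    ∫⁻ x in Ioc a b, ENNReal.ofReal (f x) = ENNReal.ofReal (∫ x in a..b, f x) := by
  rw [intervalIntegral.integral_of_le hab, ofReal_integral_eq_lintegral_ofReal
    ((intervalIntegrable_iff_integrableOn_Ioc_of_le hab).1 hf)
    (ae_restrict_of_forall_mem measurableSet_Ioc hf₀)]

section RpowOfDistance

variable {γ : ℝ}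

theorem intervalIntegrable_sub_rpow (hγ : -1 < γ) (a b : ℝ) :
    IntervalIntegrable (fun x => (b - x) ^ γ) volume a b := by
  simpa using (intervalIntegral.intervalIntegrable_rpow' hγ (a := b - a) (b := 0)).comp_sub_left b

theorem intervalIntegrable_rpow_sub (hγ : -1 < γ) (a b : ℝ) :
    IntervalIntegrable (fun x => (x - a) ^ γ) volume a b := by
  simpa using (intervalIntegral.intervalIntegrable_rpow' hγ (a := 0) (b := b - a)).comp_sub_right a

theorem integral_sub_rpow (hγ : -1 < γ) (a b : ℝ) :
    ∫ x in a..b, (b - x) ^ γ = (b - a) ^ (γ + 1) / (γ + 1) := by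
  rw [intervalIntegral.integral_comp_sub_left (fun x => x ^ γ), sub_self,
    integral_rpow (Or.inl hγ), Real.zero_rpow (by linarith), sub_zero]

theorem integral_rpow_sub (hγ : -1 < γ) (a b : ℝ) :
    ∫ x in a..b, (x - a) ^ γ = (b - a) ^ (γ + 1) / (γ + 1) := by
  rw [intervalIntegral.integral_comp_sub_right (fun x => x ^ γ), sub_self,
    integral_rpow (Or.inl hγ), Real.zero_rpow (by linarith), sub_zero]

theorem lintegral_Ioc_abs_sub_rpow (hγ : -1 < γ) {u : ℝ} (hu : u ∈ Icc (0 : ℝ) 1) :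
    ∫⁻ v in Ioc 0 1, ENNReal.ofReal (|u - v| ^ γ)
      = ENNReal.ofReal ((u ^ (γ + 1) + (1 - u) ^ (γ + 1)) / (γ + 1)) := by
  obtain ⟨hu₀, hu₁⟩ := hu
  have hleft : ∫⁻ v in Ioc 0 u, ENNReal.ofReal (|u - v| ^ γ)
      = ENNReal.ofReal (u ^ (γ + 1) / (γ + 1)) := by
    rw [setLIntegral_congr_fun measurableSet_Ioc fun v hv => by
        rw [abs_of_nonneg (sub_nonneg.2 hv.2)],
      lintegral_Ioc_eq_ofReal_intervalIntegral hu₀ (intervalIntegrable_sub_rpow hγ 0 u)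
        fun v hv => Real.rpow_nonneg (sub_nonneg.2 hv.2) γ,
      integral_sub_rpow hγ, sub_zero]
  have hright : ∫⁻ v in Ioc u 1, ENNReal.ofReal (|u - v| ^ γ)
      = ENNReal.ofReal ((1 - u) ^ (γ + 1) / (γ + 1)) := by
    rw [setLIntegral_congr_fun measurableSet_Ioc fun v hv => by
        rw [abs_sub_comm, abs_of_nonneg (sub_nonneg.2 hv.1.le)],
      lintegral_Ioc_eq_ofReal_intervalIntegral hu₁ (intervalIntegrable_rpow_sub hγ u 1)
        fun v hv => Real.rpow_nonneg (sub_nonneg.2 hv.1.le) γ,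
      integral_rpow_sub hγ]
  have hγ₁ : 0 < γ + 1 := by linarith
  rw [← Ioc_union_Ioc_eq_Ioc hu₀ hu₁,
    lintegral_union measurableSet_Ioc (Ioc_disjoint_Ioc_of_le le_rfl), hleft, hright,
    ← ENNReal.ofReal_add (by positivity) (div_nonneg (Real.rpow_nonneg (by linarith) _) hγ₁.le),
    add_div]

theorem lintegral_Ioc_lintegral_Ioc_abs_sub_rpow (hγ : -1 < γ) :
    ∫⁻ u in Ioc 0 1, ∫⁻ v in Ioc 0 1, ENNReal.ofReal (|u - v| ^ γ)
      = ENNReal.ofReal (2 / ((γ + 1) * (γ + 2))) := by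
  have hγ₁ : -1 < γ + 1 := by linarith
  have hleft := intervalIntegrable_rpow_sub hγ₁ 0 1
  have hright := intervalIntegrable_sub_rpow hγ₁ 0 1
  simp only [sub_zero] at hleft
  rw [setLIntegral_congr_fun measurableSet_Ioc fun u hu =>
      lintegral_Ioc_abs_sub_rpow hγ (Ioc_subset_Icc_self hu),
    lintegral_Ioc_eq_ofReal_intervalIntegral zero_le_one ((hleft.add hright).div_const _)
      fun u hu => div_nonneg (add_nonneg (Real.rpow_nonneg hu.1.le _)
        (Real.rpow_nonneg (sub_nonneg.2 hu.2) _)) (by linarith),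
    intervalIntegral.integral_div, intervalIntegral.integral_add hleft hright]
  have hl := integral_rpow_sub hγ₁ 0 1
  have hr := integral_sub_rpow hγ₁ 0 1
  simp only [sub_zero, Real.one_rpow] at hl hr
  rw [hl, hr]
  congr 1
  field_simp
  ring

end RpowOfDistance

section SquareOfIntegral

variable {X Y : Type*} [MeasurableSpace X] [MeasurableSpace Y] {μ : Measure Y} {ν : Measure X}

theorem integral_sq_integral_eq_toReal_lintegral [SFinite μ] {f : X → Y → ℝ}
    (hf : Measurable (Function.uncurry f)) (hf₀ : ∀ x y, 0 ≤ f x y)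
    (hfin : ∫⁻ x, (∫⁻ y, ENNReal.ofReal (f x y) ∂μ) ^ 2 ∂ν ≠ ∞) :
    ∫ x, (∫ y, f x y ∂μ) ^ 2 ∂ν = (∫⁻ x, (∫⁻ y, ENNReal.ofReal (f x y) ∂μ) ^ 2 ∂ν).toReal := by
  have hK : Measurable fun x => ∫ y, f x y ∂μ :=
    (hf.stronglyMeasurable.integral_prod_right).measurable
  have hL : Measurable fun x => ∫⁻ y, ENNReal.ofReal (f x y) ∂μ :=
    hf.ennreal_ofReal.lintegral_prod_right'
  rw [integral_eq_lintegral_of_nonneg_ae (ae_of_all _ fun x => sq_nonneg _)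
    (hK.pow_const 2).aestronglyMeasurable]
  congr 1
  refine lintegral_congr_ae ?_
  filter_upwards [ae_lt_top (hL.pow_const 2) hfin] with x hx
  have hint : Integrable (f x) μ :=
    ⟨(hf.comp measurable_prodMk_left).aestronglyMeasurable,
      (hasFiniteIntegral_iff_ofReal (ae_of_all _ (hf₀ x))).2
        (lt_top_iff_ne_top.2 fun h => by simp [h] at hx)⟩
  rw [ENNReal.ofReal_pow (integral_nonneg (hf₀ x)),
    ofReal_integral_eq_lintegral_ofReal hint (ae_of_all _ (hf₀ x))]

theorem lintegral_sq_lintegral_mul_comm [SFinite μ] [SFinite ν] {g : Y × X → ℝ≥0∞}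
    (hg : Measurable g) :
    ∫⁻ p, (∫⁻ u, g (u, p.1) * g (u, p.2) ∂μ) ^ 2 ∂(ν.prod ν)
      = ∫⁻ q, (∫⁻ x, g (q.1, x) * g (q.2, x) ∂ν) ^ 2 ∂(μ.prod μ) := by
  calc ∫⁻ p, (∫⁻ u, g (u, p.1) * g (u, p.2) ∂μ) ^ 2 ∂(ν.prod ν)
      = ∫⁻ p, ∫⁻ q, g (q.1, p.1) * g (q.1, p.2) * (g (q.2, p.1) * g (q.2, p.2)) ∂(μ.prod μ)
          ∂(ν.prod ν) := by
        refine lintegral_congr fun p => ?_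
        rw [sq, ← lintegral_prod_mul (by fun_prop) (by fun_prop)]
    _ = ∫⁻ q, ∫⁻ p, g (q.1, p.1) * g (q.2, p.1) * (g (q.1, p.2) * g (q.2, p.2)) ∂(ν.prod ν)
          ∂(μ.prod μ) := by
        rw [lintegral_lintegral_swap (by fun_prop)]
        simp only [mul_mul_mul_comm]
    _ = ∫⁻ q, (∫⁻ x, g (q.1, x) * g (q.2, x) ∂ν) ^ 2 ∂(μ.prod μ) := by
        refine lintegral_congr fun q => ?_
        rw [sq, ← lintegral_prod_mul (by fun_prop) (by fun_prop)]

end SquareOfIntegral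

theorem lintegral_sq_lintegral_Ioc_posPow_mul {α : ℝ} (hα : -3 / 4 < α) (hα' : α < -1 / 2) :
    ∫⁻ p : ℝ × ℝ, (∫⁻ u in Ioc 0 1, ENNReal.ofReal (posPow (u - p.1) α * posPow (u - p.2) α)) ^ 2
      = ENNReal.ofReal
          (eulerBeta (α + 1) (-2 * α - 1) ^ 2 * (2 / ((4 * α + 3) * (4 * α + 4)))) := by
  set g : ℝ × ℝ → ℝ≥0∞ := fun q => ENNReal.ofReal (posPow (q.1 - q.2) α)
  have hg : Measurable g := by fun_prop
  have hsq : ∀ u v, u ≠ v → (∫⁻ x, g (u, x) * g (v, x)) ^ 2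
      = ENNReal.ofReal (eulerBeta (α + 1) (-2 * α - 1) ^ 2)
        * ENNReal.ofReal (|u - v| ^ ((2 * α + 1) * 2)) := by
    intro u v huv
    rw [lintegral_posPow_mul_posPow_of_ne (by linarith) hα' huv, ← ENNReal.ofReal_pow
      (mul_nonneg (eulerBeta_pos (by linarith) (by linarith)).le (by positivity)),
      ← ENNReal.ofReal_mul (sq_nonneg _), mul_pow, Real.rpow_mul (abs_nonneg _)]
    norm_cast
  simp_rw [ENNReal.ofReal_mul (posPow_nonneg _ _)]
  rw [Measure.volume_eq_prod, lintegral_sq_lintegral_mul_comm hg, lintegral_prod _ (by fun_prop)]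
  calc ∫⁻ u in Ioc 0 1, ∫⁻ v in Ioc 0 1, (∫⁻ x, g (u, x) * g (v, x)) ^ 2
      = ∫⁻ u in Ioc 0 1, ∫⁻ v in Ioc 0 1, ENNReal.ofReal (eulerBeta (α + 1) (-2 * α - 1) ^ 2)
          * ENNReal.ofReal (|u - v| ^ ((2 * α + 1) * 2)) := by
        refine lintegral_congr fun u => lintegral_congr_ae ?_
        filter_upwards [Measure.ae_ne _ u] with v hv using hsq u v hv.symm
    _ = _ := by
        simp_rw [lintegral_const_mul' _ _ ENNReal.ofReal_ne_top]
        rw [lintegral_Ioc_lintegral_Ioc_abs_sub_rpow (by linarith),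
          ← ENNReal.ofReal_mul (sq_nonneg _)]
        ring_nf

/-- For `H ∈ (3/4, 1)`,
`∫_{ℝ²} (∫_0^1 (u-x)₊^(H-3/2) (u-y)₊^(H-3/2) du)² dx dy
  = B(H-1/2, 2-2H)² / ((4H-3)(2H-1))`. -/
theorem stmt17 (H : ℝ) (hH : H ∈ Ioo (3 / 4 : ℝ) 1) :
    (∫ p : ℝ × ℝ,
        (∫ u in (0 : ℝ)..1, posPow (u - p.1) (H - 3 / 2) * posPow (u - p.2) (H - 3 / 2)) ^ 2)
      = eulerBeta (H - 1 / 2) (2 - 2 * H) ^ 2 / ((4 * H - 3) * (2 * H - 1)) := by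
  obtain ⟨hH₁, hH₂⟩ := hH
  have hlint := lintegral_sq_lintegral_Ioc_posPow_mul (α := H - 3 / 2) (by linarith) (by linarith)
  simp_rw [intervalIntegral.integral_of_le zero_le_one]
  rw [integral_sq_integral_eq_toReal_lintegral (by fun_prop)
      (fun _ _ => mul_nonneg (posPow_nonneg _ _) (posPow_nonneg _ _))
      (hlint ▸ ENNReal.ofReal_ne_top),
    hlint, ENNReal.toReal_ofReal (mul_nonneg (sq_nonneg _) (div_nonneg zero_le_two
      (mul_nonneg (by linarith) (by linarith))))]
  rw [show H - 3 / 2 + 1 = H - 1 / 2 by ring, show -2 * (H - 3 / 2) - 1 = 2 - 2 * H by ring,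
    show (4 * (H - 3 / 2) + 3) * (4 * (H - 3 / 2) + 4) = 2 * ((4 * H - 3) * (2 * H - 1)) by ring,
    div_mul_cancel_left₀ two_ne_zero]
  exact (div_eq_mul_inv _ _).symm
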